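/- arXiv:2109.06147 — 3 statements merged into one kernel-verified Lean document; each statement's English description precedes it below -/
import Mathlib

section
/- Let 0 < q < 1 and let d_{2n}, e_n be defined by 2d_{2n} = (1+2𝔞u)q^n + (1-2𝔞u)q^{-n} and 2e_n = (-B₀ + 2uφ'(0))q^{n/2} - (B₀ + 2uφ'(0))q^{-n/2}, where 𝔞, u, B₀, φ'(0) are complex constants with (1-2𝔞u)(1+2𝔞u) ≠ 0, and γ_{n+1} = (q^{(n+1)/2}-q^{-(n+1)/2})/(q^{1/2}-q^{-1/2}). If (r₀ q^{n/2} + s₀ q^n - r₀ - s₀) d_{2n} = γ_{n+1} e_n holds for all n ≥ 1 (r₀, s₀ ∈ ℂ), then r₀ = s₀ = 0, B₀ = 0 and φ'(0) = 0. -/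
/-- `qC q x` is `q ^ x` (real power) viewed as a complex number. -/
noncomputable def qC (q : ℝ) (x : ℝ) : ℂ := ((q ^ x : ℝ) : ℂ)

theorem stmt_17 (q : ℝ) (hq0 : 0 < q) (hq1 : q < 1)
    (𝔞 u B₀ φ' r₀ s₀ : ℂ)
    (hu : u = 1 / (qC q (1/2) - qC q (-(1/2))))
    (h𝔞 : (1 - 2 * 𝔞 * u) * (1 + 2 * 𝔞 * u) ≠ 0)
    (d e γ : ℕ → ℂ)
    (hd : ∀ n : ℕ, 2 * d n = (1 + 2 * 𝔞 * u) * qC q (n : ℝ) + (1 - 2 * 𝔞 * u) * qC q (-(n : ℝ)))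
    (he : ∀ n : ℕ, 2 * e n = (-B₀ + 2 * u * φ') * qC q ((n : ℝ) / 2)
        - (B₀ + 2 * u * φ') * qC q (-((n : ℝ) / 2)))
    (hγ : ∀ n : ℕ, γ n = (qC q ((n : ℝ) / 2) - qC q (-((n : ℝ) / 2)))
        / (qC q (1/2) - qC q (-(1/2))))
    (h : ∀ n : ℕ, 1 ≤ n →
      (r₀ * qC q ((n : ℝ) / 2) + s₀ * qC q (n : ℝ) - r₀ - s₀) * d n = γ (n + 1) * e n) :
    r₀ = 0 ∧ s₀ = 0 ∧ B₀ = 0 ∧ φ' = 0 := by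
  have hq0' : (0:ℝ) ≤ q := hq0.le
  set Q : ℝ := q ^ ((1:ℝ)/2) with hQdef
  have hQ0 : 0 < Q := Real.rpow_pos_of_pos hq0 _
  have hQ1 : Q < 1 := Real.rpow_lt_one hq0' hq1 (by norm_num)
  set QC : ℂ := (Q : ℂ) with hQCdef
  have hQC0 : QC ≠ 0 := by
    simp only [hQCdef, ne_eq, Complex.ofReal_eq_zero]
    exact hQ0.ne'
  -- conversion lemmas
  have key1 : ∀ n : ℕ, qC q ((n : ℝ)/2) = QC ^ n := by
    intro n
    unfold qC
    rw [show ((n:ℝ)/2) = (1/2:ℝ) * (n:ℝ) by ring, Real.rpow_mul hq0', Real.rpow_natCast]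
    push_cast [hQCdef, hQdef]
    ring
  have key2 : ∀ n : ℕ, qC q (-((n : ℝ)/2)) = (QC ^ n)⁻¹ := by
    intro n
    unfold qC
    rw [Real.rpow_neg hq0', show ((n:ℝ)/2) = (1/2:ℝ) * (n:ℝ) by ring,
      Real.rpow_mul hq0', Real.rpow_natCast]
    push_cast [hQCdef, hQdef]
    ring
  have key3 : ∀ n : ℕ, qC q (n : ℝ) = (QC ^ n) ^ 2 := by
    intro n
    unfold qC
    rw [show ((n:ℝ)) = (1/2:ℝ) * ((2*n:ℕ):ℝ) by push_cast; ring, Real.rpow_mul hq0',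
      Real.rpow_natCast]
    push_cast [hQCdef, hQdef]
    ring
  have key4 : ∀ n : ℕ, qC q (-(n : ℝ)) = ((QC ^ n)⁻¹) ^ 2 := by
    intro n
    unfold qC
    rw [Real.rpow_neg hq0', show ((n:ℝ)) = (1/2:ℝ) * ((2*n:ℕ):ℝ) by push_cast; ring,
      Real.rpow_mul hq0', Real.rpow_natCast]
    rw [← inv_pow, ← inv_pow]
    push_cast [hQCdef, hQdef]
    ring
  have keyhalf : qC q (1/2) = QC := by
    unfold qC; rw [hQCdef, hQdef]
  have keyhalf' : qC q (-(1/2)) = QC⁻¹ := by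
    unfold qC
    rw [Real.rpow_neg hq0', hQCdef, hQdef]
    push_cast
    ring
  set K : ℂ := QC - QC⁻¹ with hKdef
  have hK : K ≠ 0 := by
    have h1 : (1:ℝ) < Q⁻¹ := (one_lt_inv₀ hQ0).2 hQ1
    have h2 : Q - Q⁻¹ < 0 := by linarith
    have h3 : K = ((Q - Q⁻¹ : ℝ) : ℂ) := by
      push_cast [hKdef, hQCdef]; ring
    rw [h3]
    simp only [ne_eq, Complex.ofReal_eq_zero]
    exact h2.ne
  have hu' : u = 1 / K := by rw [hu, keyhalf, keyhalf']
  have hu0 : u ≠ 0 := by rw [hu']; exact one_div_ne_zero hK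
  set a : ℂ := 1 + 2 * 𝔞 * u with hadef
  set b : ℂ := 1 - 2 * 𝔞 * u with hbdef
  set c : ℂ := -B₀ + 2 * u * φ' with hcdef
  set d' : ℂ := B₀ + 2 * u * φ' with hd'def
  have ha : a ≠ 0 := right_ne_zero_of_mul h𝔞
  have hb : b ≠ 0 := left_ne_zero_of_mul h𝔞
  -- the polynomial
  set p : Polynomial ℂ :=
    Polynomial.C (K*a*s₀) * Polynomial.X ^ 6 + Polynomial.C (K*a*r₀) * Polynomial.X ^ 5
    + Polynomial.C (-(K*a*(r₀+s₀)) - c*QC) * Polynomial.X ^ 4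
    + Polynomial.C (K*b*s₀ + d'*QC + c*QC⁻¹) * Polynomial.X ^ 2
    + Polynomial.C (K*b*r₀) * Polynomial.X
    + Polynomial.C (-(K*b*(r₀+s₀)) - d'*QC⁻¹) with hpdef
  have heval : ∀ n : ℕ, 1 ≤ n → p.eval (QC ^ n) = 0 := by
    intro n hn
    set x : ℂ := QC ^ n with hxdef
    have hx : x ≠ 0 := pow_ne_zero _ hQC0
    have i2 : x * x⁻¹ = 1 := mul_inv_cancel₀ hx
    have iK : K * K⁻¹ = 1 := mul_inv_cancel₀ hK
    have h1 := h n hn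
    rw [key1, key3, hγ (n+1), key1 (n+1), key2 (n+1), keyhalf, keyhalf', ← hKdef,
      pow_succ QC n, mul_inv, ← hxdef] at h1
    have e1 : d n = (a*x^2 + b*(x⁻¹)^2)/2 := by
      have hdn := hd n
      rw [key3, key4, ← hxdef] at hdn
      linear_combination hdn / 2
    have e2 : e n = (c*x - d'*x⁻¹)/2 := by
      have hen := he n
      rw [key1, key2, ← hxdef] at hen
      linear_combination hen / 2
    rw [e1, e2] at h1
    have h3 : K*((r₀*x + s₀*x^2 - r₀ - s₀) * (a*x^2 + b*(x⁻¹)^2))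
        = (x*QC - x⁻¹*QC⁻¹)*(c*x - d'*x⁻¹) := by
      linear_combination 2*K*h1 + ((x*QC - x⁻¹*QC⁻¹)*(c*x - d'*x⁻¹))*iK
    simp only [hpdef, Polynomial.eval_add, Polynomial.eval_mul, Polynomial.eval_pow,
      Polynomial.eval_C, Polynomial.eval_X]
    linear_combination x^2*h3 +
      (-(K*(r₀*x+s₀*x^2-r₀-s₀)*b*(x*x⁻¹+1)) - d'*QC*x^2 - c*QC⁻¹*x^2
        + d'*QC⁻¹*(x*x⁻¹+1)) * i2
  -- infinitely many roots
  have hinj : Function.Injective (fun n : ℕ => QC ^ (n+1)) := by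
    intro m n hmn
    simp only at hmn
    have hQR : ∀ k : ℕ, QC ^ k = ((Q ^ k : ℝ) : ℂ) := by
      intro k; push_cast [hQCdef]; ring
    rw [hQR, hQR, Complex.ofReal_inj] at hmn
    have hsa : StrictAnti (fun k : ℕ => Q ^ k) := pow_right_strictAnti₀ hQ0 hQ1
    have := hsa.injective hmn
    omega
  have hroots : {x : ℂ | p.IsRoot x}.Infinite := by
    apply Set.infinite_of_injective_forall_mem hinj
    intro n
    exact heval (n+1) (by omega)
  have hp0 : p = 0 := Polynomial.eq_zero_of_infinite_isRoot p hroots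
  -- extract coefficients
  have hcoeff : ∀ k : ℕ, p.coeff k = 0 := by
    intro k; rw [hp0]; simp
  have hcoeff' : ∀ k : ℕ, (if k = 6 then K*a*s₀ else 0) + (if k = 5 then K*a*r₀ else 0)
      + (if k = 4 then -(K*a*(r₀+s₀)) - c*QC else 0)
      + (if k = 2 then K*b*s₀ + d'*QC + c*QC⁻¹ else 0)
      + (if 1 = k then K*b*r₀ else 0)
      + (if k = 0 then -(K*b*(r₀+s₀)) - d'*QC⁻¹ else 0) = 0 := by
    intro k
    have hk := hcoeff k
    rw [hpdef] at hk
    simpa only [Polynomial.coeff_add, Polynomial.coeff_C_mul, Polynomial.coeff_X_pow,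
      Polynomial.coeff_X, Polynomial.coeff_C, mul_ite, mul_one, mul_zero] using hk
  have hs0 : s₀ = 0 := by
    have := hcoeff' 6; norm_num at this
    rcases this with (h0 | h0) | h0
    · exact absurd h0 hK
    · exact absurd h0 ha
    · exact h0
  have hr0 : r₀ = 0 := by
    have := hcoeff' 5; norm_num at this
    rcases this with (h0 | h0) | h0
    · exact absurd h0 hK
    · exact absurd h0 ha
    · exact h0
  have c4 : -(K*a*(r₀+s₀)) - c*QC = 0 := by
    have := hcoeff' 4; norm_num at this; exact this
  have c0 : -(K*b*(r₀+s₀)) - d'*QC⁻¹ = 0 := by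
    have := hcoeff' 0; norm_num at this; exact this
  have hc0 : c = 0 := by
    have : c * QC = 0 := by rw [hr0, hs0] at c4; linear_combination -c4
    rcases mul_eq_zero.1 this with h0 | h0
    · exact h0
    · exact absurd h0 hQC0
  have hd0 : d' = 0 := by
    have hQCi : QC⁻¹ ≠ 0 := inv_ne_zero hQC0
    have : d' * QC⁻¹ = 0 := by rw [hr0, hs0] at c0; linear_combination -c0
    rcases mul_eq_zero.1 this with h0 | h0
    · exact h0
    · exact absurd h0 hQCi
  have hB : B₀ = 0 := by
    linear_combination ((hd0 - hc0) - (hd'def - hcdef)) / 2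
  have hφ : φ' = 0 := by
    have h4 : 4 * u * φ' = 0 := by
      linear_combination hc0 + hd0 - hcdef - hd'def
    have : u * φ' = 0 := by linear_combination h4 / 4
    rcases mul_eq_zero.1 this with h0 | h0
    · exact absurd h0 hu0
    · exact h0
  exact ⟨hr0, hs0, hB, hφ⟩
end

section
/- Let 0 < q < 1 and u = 1/(q^{1/2}-q^{-1/2}). Suppose 𝔟, B₀ ∈ ℂ and define B_n = q^n (1+q^{-1})(𝔟u(q^n - 1) + B₀/(1+q^{-1})) for n ≥ 0, and r_n = -u q^{-1/2} q^{n/2} + b̂ q^{-n/2} with b̂ ∈ ℂ (the case â = -u q^{-1/2} from 1+2𝔞u = 0). If (B_n) satisfies r_{n+3}B_{n+2} - (r_{n+2}+r_{n+1})B_{n+1} + r_n B_n = 0 for all n ≥ 0 and b̂ ≠ 0, then 𝔟 = 0 and B₀ = 0, hence B_n = 0 for all n. -/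
theorem stmt_18 (q : ℝ) (hq0 : 0 < q) (hq1 : q < 1)
    (u 𝔟 B₀ bhat : ℂ) (hbhat : bhat ≠ 0)
    (hu : u = 1 / (qC q (1/2) - qC q (-(1/2))))
    (B r : ℕ → ℂ)
    (hB : ∀ n : ℕ, B n = qC q (n : ℝ) * (1 + qC q (-1))
        * (𝔟 * u * (qC q (n : ℝ) - 1) + B₀ / (1 + qC q (-1))))
    (hr : ∀ n : ℕ, r n = -u * qC q (-(1/2)) * qC q ((n : ℝ) / 2) + bhat * qC q (-((n : ℝ) / 2)))
    (hrec : ∀ n : ℕ,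
      r (n + 3) * B (n + 2) - (r (n + 2) + r (n + 1)) * B (n + 1) + r n * B n = 0) :
    𝔟 = 0 ∧ B₀ = 0 ∧ ∀ n : ℕ, B n = 0 := by
  set sr : ℝ := q ^ ((1:ℝ)/2) with hsr
  have hsr0 : 0 < sr := Real.rpow_pos_of_pos hq0 _
  have hsr1 : sr < 1 := Real.rpow_lt_one hq0.le hq1 (by norm_num)
  set s : ℂ := (sr : ℂ) with hsdef
  have A : ∀ n : ℕ, qC q ((n:ℝ)/2) = s^n := by
    intro n
    have h : (n:ℝ)/2 = (1/2)*(n:ℝ) := by ring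
    rw [qC, h, Real.rpow_mul hq0.le, Real.rpow_natCast]
    push_cast; ring
  have Bm : ∀ n : ℕ, qC q (-((n:ℝ)/2)) = (s^n)⁻¹ := by
    intro n
    have h : -((n:ℝ)/2) = (1/2)*(n:ℝ)*(-1) := by ring
    rw [qC, h, Real.rpow_mul hq0.le, Real.rpow_mul (by positivity), Real.rpow_natCast,
      Real.rpow_neg_one]
    push_cast; ring
  have hs0 : s ≠ 0 := by
    simp only [hsdef, ne_eq, Complex.ofReal_eq_zero]; exact ne_of_gt hsr0
  have hD : s^2 - 1 ≠ 0 := by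
    have hcast : s^2 - 1 = ((sr^2 - 1 : ℝ) : ℂ) := by push_cast; ring
    rw [hcast, Complex.ofReal_ne_zero]; nlinarith
  have hqh : qC q (1/2) = s := by have := A 1; norm_num at this; exact this
  have hqmh : qC q (-(1/2)) = s⁻¹ := by have := Bm 1; norm_num at this; exact this
  have hqm1 : qC q (-1) = (s^2)⁻¹ := by have := Bm 2; norm_num at this; exact this
  have hqn : ∀ n : ℕ, qC q (n:ℝ) = s^(2*n) := by
    intro n
    have h := A (2*n)
    have e : (((2*n : ℕ)):ℝ)/2 = (n:ℝ) := by push_cast; ring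
    rw [e] at h; exact h
  have hP2' : s^2 + 1 ≠ 0 := by
    have hcast : s^2 + 1 = ((sr^2 + 1 : ℝ) : ℂ) := by push_cast; ring
    rw [hcast, Complex.ofReal_ne_zero]; positivity
  have hP2 : (1:ℂ) + (s^2)⁻¹ ≠ 0 := by
    have : (1:ℂ) + (s^2)⁻¹ = (s^2 + 1)/s^2 := by
      field_simp
    rw [this]
    exact div_ne_zero hP2' (pow_ne_zero _ hs0)
  have hsub : s - s⁻¹ ≠ 0 := by
    have h : s - s⁻¹ = (s^2 - 1)/s := by field_simp
    rw [h]; exact div_ne_zero hD hs0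
  have huu : u = s / (s^2 - 1) := by
    rw [hu, hqh, hqmh, div_eq_div_iff hsub hD]
    field_simp
  have hBn' : ∀ n : ℕ, s*(s^2-1)*B n
      = 𝔟*(s^2+1)*s^(2*n)*(s^(2*n)-1) + B₀*s^(2*n)*s*(s^2-1) := by
    intro n
    rw [hB n, hqn n, hqm1, huu]
    field_simp
  have hrn' : ∀ n : ℕ, s^n*(s^2-1)*r n = bhat*(s^2-1) - s^(2*n) := by
    intro n
    have hsn : s^n ≠ 0 := pow_ne_zero _ hs0
    rw [hr n, A n, Bm n, hqmh, huu]
    field_simp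
    ring
  have h0 := hrec 0
  have h1 := hrec 1
  norm_num at h0 h1
  -- cleaned equations
  have E0 : (bhat*(s^2-1) - s^6) * (𝔟*(s^2+1)*s^4*(s^4-1) + B₀*s^4*s*(s^2-1))
      - (s*(bhat*(s^2-1) - s^4) + s^2*(bhat*(s^2-1) - s^2))
          * (𝔟*(s^2+1)*s^2*(s^2-1) + B₀*s^2*s*(s^2-1))
      + s^3*(bhat*(s^2-1) - 1) * (𝔟*(s^2+1)*1*(1-1) + B₀*1*s*(s^2-1)) = 0 := by
    have hB0' := hBn' 0
    have hB1' := hBn' 1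
    have hB2' := hBn' 2
    have hr0' := hrn' 0
    have hr1' := hrn' 1
    have hr2' := hrn' 2
    have hr3' := hrn' 3
    norm_num at hB0' hB1' hB2' hr0' hr1' hr2' hr3'
    linear_combination (s^4*(s^2-1)^2) * h0
      - (s*(s^2-1)*B 2) * hr3' - (bhat*(s^2-1) - s^6) * hB2'
      + (s*(s*(s^2-1)*B 1)) * hr2' + (s^2*(s*(s^2-1)*B 1)) * hr1'
      + (s*(bhat*(s^2-1) - s^4) + s^2*(bhat*(s^2-1) - s^2)) * hB1'
      - (s^3*(s*(s^2-1)*B 0)) * hr0' - (s^3*(bhat*(s^2-1) - 1)) * hB0'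
  have E1 : (bhat*(s^2-1) - s^8) * (𝔟*(s^2+1)*s^6*(s^6-1) + B₀*s^6*s*(s^2-1))
      - (s*(bhat*(s^2-1) - s^6) + s^2*(bhat*(s^2-1) - s^4))
          * (𝔟*(s^2+1)*s^4*(s^4-1) + B₀*s^4*s*(s^2-1))
      + s^3*(bhat*(s^2-1) - s^2) * (𝔟*(s^2+1)*s^2*(s^2-1) + B₀*s^2*s*(s^2-1)) = 0 := by
    have hB1' := hBn' 1
    have hB2' := hBn' 2
    have hB3' := hBn' 3
    have hr1' := hrn' 1
    have hr2' := hrn' 2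
    have hr3' := hrn' 3
    have hr4' := hrn' 4
    norm_num at hB1' hB2' hB3' hr1' hr2' hr3' hr4'
    linear_combination (s^5*(s^2-1)^2) * h1
      - (s*(s^2-1)*B 3) * hr4' - (bhat*(s^2-1) - s^8) * hB3'
      + (s*(s*(s^2-1)*B 2)) * hr3' + (s^2*(s*(s^2-1)*B 2)) * hr2'
      + (s*(bhat*(s^2-1) - s^6) + s^2*(bhat*(s^2-1) - s^4)) * hB2'
      - (s^3*(s*(s^2-1)*B 1)) * hr1' - (s^3*(bhat*(s^2-1) - s^2)) * hB1'
  -- eliminate B₀ and bhat: 𝔟 times a nonzero polynomial vanishes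
  have hbG : 𝔟 * (s^7*(s-1)^3*(s+1)^2
      *(1+s+3*s^2+3*s^3+5*s^4+4*s^5+5*s^6+3*s^7+3*s^8+s^9+s^10)) = 0 := by
    linear_combination s^4*E0 - E1
  have hm1 : s - 1 ≠ 0 := by
    have hcast : s - 1 = ((sr - 1 : ℝ) : ℂ) := by push_cast; ring
    rw [hcast, Complex.ofReal_ne_zero]; linarith
  have hp1 : s + 1 ≠ 0 := by
    have hcast : s + 1 = ((sr + 1 : ℝ) : ℂ) := by push_cast; ring
    rw [hcast, Complex.ofReal_ne_zero]; positivity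
  have hH : (1+s+3*s^2+3*s^3+5*s^4+4*s^5+5*s^6+3*s^7+3*s^8+s^9+s^10) ≠ 0 := by
    have hcast : (1+s+3*s^2+3*s^3+5*s^4+4*s^5+5*s^6+3*s^7+3*s^8+s^9+s^10)
        = ((1+sr+3*sr^2+3*sr^3+5*sr^4+4*sr^5+5*sr^6+3*sr^7+3*sr^8+sr^9+sr^10 : ℝ) : ℂ) := by
      push_cast; ring
    rw [hcast, Complex.ofReal_ne_zero]; positivity
  have hGne : (s^7*(s-1)^3*(s+1)^2
      *(1+s+3*s^2+3*s^3+5*s^4+4*s^5+5*s^6+3*s^7+3*s^8+s^9+s^10)) ≠ 0 := by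
    exact mul_ne_zero (mul_ne_zero (mul_ne_zero (pow_ne_zero _ hs0)
      (pow_ne_zero _ hm1)) (pow_ne_zero _ hp1)) hH
  have hb : 𝔟 = 0 := by
    rcases mul_eq_zero.mp hbG with h | h
    · exact h
    · exact absurd h hGne
  -- now B₀ = 0
  rw [hb] at E0
  have hB0G : B₀ * (s^4*(s-1)^3*(s+1)^2*(s^2+s+1)*(s^2+1)) = 0 := by
    linear_combination -E0
  have hq2 : s^2+s+1 ≠ 0 := by
    have hcast : s^2+s+1 = ((sr^2+sr+1 : ℝ) : ℂ) := by push_cast; ring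
    rw [hcast, Complex.ofReal_ne_zero]; positivity
  have hQne : (s^4*(s-1)^3*(s+1)^2*(s^2+s+1)*(s^2+1)) ≠ 0 := by
    exact mul_ne_zero (mul_ne_zero (mul_ne_zero (mul_ne_zero (pow_ne_zero _ hs0)
      (pow_ne_zero _ hm1)) (pow_ne_zero _ hp1)) hq2) hP2'
  have hB₀ : B₀ = 0 := by
    rcases mul_eq_zero.mp hB0G with h | h
    · exact h
    · exact absurd h hQne
  refine ⟨hb, hB₀, fun n => ?_⟩
  rw [hB n, hb, hB₀]
  simp
end

section
/- Let 0 < q < 1 and a, b parameters with all q-shifted denominators nonzero. With γ_n = (q^{n/2}-q^{-n/2})/(q^{1/2}-q^{-1/2}), B_j = q^{1/4}(1+q^{1/2})(1-q^{(a+b)/2})(q^{a/2}-q^{b/2})q^j / [2(1-q^{j+(a+b)/2})(1-q^{j+(a+b)/2+1})], and r+s = (q^{(2a+1)/4}+q^{-(2a+1)/4})/2 - (q^{(2b+1)/4}+q^{-(2b+1)/4})/2, the formula b_n = (γ_n - γ_{n-1}) Σ_{j=0}^{n-1} B_j - (r+s)γ_n equals b_n = (q^{a/2}-q^{b/2}) γ_n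 (1+q^{n+a+b+1/2}) q^{-(2a+2b+1)/4} / (2(1-q^{n+(a+b)/2})) for all n ≥ 0. -/
/-!
With `c = q^{(a+b)/2}` the coefficients `B_j` telescope,
`q^j / ((1 - c q^j)(1 - c q^{j+1})) = (1/(1 - c q^j) - 1/(1 - c q^{j+1})) / (c (1 - q))`,
so `∑_{j<n} B_j` has a closed form. Writing every power of `q` through `t = q^{1/4}`,
`Q = q^{n/2}`, `α = q^{a/2}`, `β = q^{b/2}` and using `γ_n - γ_{n-1} = (Q + t²/Q)/(1 + t²)`,
the claim becomes an identity of rational functions in `t, Q, α, β`.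
-/

open Finset

theorem sum_range_pow_div_mul_one_sub {K : Type*} [Field K] {q c : K} (hq : q ≠ 1)
    (hc : ∀ j : ℕ, 1 - c * q ^ j ≠ 0) (n : ℕ) :
    ∑ j ∈ range n, q ^ j / ((1 - c * q ^ j) * (1 - c * q ^ (j + 1)))
      = (1 - q ^ n) / ((1 - q) * (1 - c) * (1 - c * q ^ n)) := by
  have hc₀ : 1 - c ≠ 0 := by simpa using hc 0
  have hq₁ : 1 - q ≠ 0 := sub_ne_zero.2 hq.symm
  induction n with
  | zero => simp
  | succ n ih =>
    have hn := hc n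
    have hn₁ := hc (n + 1)
    rw [sum_range_succ, ih, pow_succ]
    rw [pow_succ] at hn₁
    rw [div_add_div _ _ (by simp [*]) (mul_ne_zero hn hn₁),
      div_eq_div_iff (by simp [*]) (by simp [*])]
    ring

theorem sum_rpow_div_mul_one_sub {q : ℝ} (hq : 0 < q) (hq₁ : q ≠ 1) {e : ℝ}
    (hden : ∀ j : ℕ, 1 - q ^ ((j : ℝ) + e) ≠ 0) (C : ℝ) (n : ℕ) :
    ∑ j ∈ range n, C * q ^ (j : ℝ) / (2 * (1 - q ^ ((j : ℝ) + e)) * (1 - q ^ ((j : ℝ) + e + 1)))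
      = C * (1 - q ^ n) / (2 * (1 - q) * (1 - q ^ e) * (1 - q ^ e * q ^ n)) := by
  have hpow : ∀ x : ℝ, ∀ j : ℕ, q ^ ((j : ℝ) + x) = q ^ x * q ^ j := fun x j => by
    rw [Real.rpow_add hq, Real.rpow_natCast, mul_comm]
  have hterm : ∀ j : ℕ, C * q ^ (j : ℝ) / (2 * (1 - q ^ ((j : ℝ) + e)) * (1 - q ^ ((j : ℝ) + e + 1)))
      = C / 2 * (q ^ j / ((1 - q ^ e * q ^ j) * (1 - q ^ e * q ^ (j + 1)))) := fun j => by
    have hsucc : q ^ ((j : ℝ) + e + 1) = q ^ e * q ^ (j + 1) := by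
      rw [← hpow]; push_cast; ring_nf
    rw [hpow, hsucc, Real.rpow_natCast, mul_assoc 2, mul_div_mul_comm]
  have hc : ∀ j : ℕ, 1 - q ^ e * q ^ j ≠ 0 := fun j => hpow e j ▸ hden j
  rw [sum_congr rfl fun j _ => hterm j, ← mul_sum, sum_range_pow_div_mul_one_sub hq₁ hc]
  field_simp

/-- With `t = q^{1/2}` and `x = q^{n/2}` this is `γ_n`. -/
def symmQNumber {K : Type*} [Field K] (t x : K) : K := (x - x⁻¹) / (t - t⁻¹)

theorem symmQNumber_eq {K : Type*} [Field K] {t x : K} (ht : t ≠ 0) (hx : x ≠ 0) :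
    symmQNumber t x = t * (x ^ 2 - 1) / (x * (t ^ 2 - 1)) := by
  unfold symmQNumber
  field_simp

theorem symmQNumber_sub_symmQNumber_div {K : Type*} [Field K] {t x : K} (ht : t ≠ 0)
    (ht₂ : t ^ 2 ≠ 1) (hx : x ≠ 0) :
    symmQNumber t x - symmQNumber t (x / t) = (x + t / x) / (1 + t) := by
  have h₁ : t ^ 2 - 1 ≠ 0 := sub_ne_zero.2 ht₂
  have h₂ : 1 + t ≠ 0 := fun h => h₁ (by linear_combination (t - 1) * h)
  rw [symmQNumber_eq ht hx, symmQNumber_eq ht (div_ne_zero hx ht)]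
  field_simp
  ring

theorem structure_coeff_closed_form {K : Type*} [Field K] {t Q α β : K} (ht : t ≠ 0)
    (ht₄ : t ^ 4 ≠ 1) (hQ : Q ≠ 0) (hα : α ≠ 0) (hβ : β ≠ 0) (hαβ : 1 - α * β ≠ 0)
    (hαβQ : 1 - α * β * Q ^ 2 ≠ 0) :
    (symmQNumber (t ^ 2) Q - symmQNumber (t ^ 2) (Q / t ^ 2)) *
        (t * (1 + t ^ 2) * (1 - α * β) * (α - β) * (1 - Q ^ 2) /
          (2 * (1 - t ^ 4) * (1 - α * β) * (1 - α * β * Q ^ 2))) -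
      ((α * t + (α * t)⁻¹) / 2 + -((β * t + (β * t)⁻¹) / 2)) * symmQNumber (t ^ 2) Q =
    (α - β) * symmQNumber (t ^ 2) Q * (1 + (Q * α * β * t) ^ 2) * (α * β * t)⁻¹
      / (2 * (1 - α * β * Q ^ 2)) := by
  have h₄ : t ^ 4 - 1 ≠ 0 := sub_ne_zero.2 ht₄
  have h₁ : 1 + t ^ 2 ≠ 0 := fun h => h₄ (by linear_combination (t ^ 2 - 1) * h)
  have h₅ : 1 - Q ^ 2 * α * β ≠ 0 := by convert hαβQ using 1; ring
  rw [symmQNumber_sub_symmQNumber_div (pow_ne_zero 2 ht) (by rwa [← pow_mul]) hQ,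
    symmQNumber_eq (pow_ne_zero 2 ht) hQ]
  field_simp
  ring

theorem stmt_19 (q : ℝ) (hq0 : 0 < q) (hq1 : q < 1) (a b : ℝ)
    (hden : ∀ n : ℕ, 1 - q ^ ((n : ℝ) + (a + b) / 2) ≠ 0)
    (γ : ℤ → ℝ)
    (hγ : ∀ n : ℤ, γ n = (q ^ ((n : ℝ) / 2) - q ^ (-((n : ℝ) / 2)))
        / (q ^ (1/2 : ℝ) - q ^ (-(1/2) : ℝ)))
    (B : ℕ → ℝ)
    (hB : ∀ j : ℕ, B j =
      q ^ (1/4 : ℝ) * (1 + q ^ (1/2 : ℝ)) * (1 - q ^ ((a + b) / 2)) * (q ^ (a / 2) - q ^ (b / 2))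
        * q ^ (j : ℝ)
      / (2 * (1 - q ^ ((j : ℝ) + (a + b) / 2)) * (1 - q ^ ((j : ℝ) + (a + b) / 2 + 1))))
    (r s : ℝ)
    (hr : r = (q ^ ((2 * a + 1) / 4) + q ^ (-(2 * a + 1) / 4)) / 2)
    (hs : s = -(q ^ ((2 * b + 1) / 4) + q ^ (-(2 * b + 1) / 4)) / 2) :
    ∀ n : ℕ,
      (γ (n : ℤ) - γ ((n : ℤ) - 1)) * (∑ j ∈ Finset.range n, B j) - (r + s) * γ (n : ℤ)
      = (q ^ (a / 2) - q ^ (b / 2)) * γ (n : ℤ) * (1 + q ^ ((n : ℝ) + a + b + 1/2))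
          * q ^ (-(2 * a + 2 * b + 1) / 4)
        / (2 * (1 - q ^ ((n : ℝ) + (a + b) / 2))) := by
  intro n
  set t := q ^ (1/4 : ℝ) with ht
  set Q := q ^ ((n : ℝ) / 2) with hQ
  set α := q ^ (a / 2) with hα
  set β := q ^ (b / 2) with hβ
  have hq : q = t ^ 4 := by simp only [ht, ← Real.rpow_mul_natCast hq0.le]; norm_num
  have hq_half : q ^ (1/2 : ℝ) = t ^ 2 := by
    simp only [ht, ← Real.rpow_mul_natCast hq0.le]; norm_num
  have hγq : ∀ m : ℤ, γ m = symmQNumber (t ^ 2) (q ^ ((m : ℝ) / 2)) := fun m => by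
    rw [hγ, symmQNumber, Real.rpow_neg hq0.le, Real.rpow_neg hq0.le, hq_half]
  have hQ_pred : q ^ ((((n : ℤ) - 1 : ℤ) : ℝ) / 2) = Q / t ^ 2 := by
    rw [hQ, ← hq_half, ← Real.rpow_sub hq0]; push_cast; ring_nf
  have hqn : q ^ n = Q ^ 2 := by
    simp only [hQ, ← Real.rpow_mul_natCast hq0.le, ← Real.rpow_natCast]; ring_nf
  have hαβ : q ^ ((a + b) / 2) = α * β := by simp only [hα, hβ, ← Real.rpow_add hq0]; ring_nf
  have hαt : q ^ ((2 * a + 1) / 4) = α * t := by simp only [hα, ht, ← Real.rpow_add hq0]; ring_nf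
  have hβt : q ^ ((2 * b + 1) / 4) = β * t := by simp only [hβ, ht, ← Real.rpow_add hq0]; ring_nf
  have hαβt : q ^ ((2 * a + 2 * b + 1) / 4) = α * β * t := by
    simp only [hα, hβ, ht, ← Real.rpow_add hq0]; ring_nf
  have hαβQ : q ^ ((n : ℝ) + (a + b) / 2) = α * β * Q ^ 2 := by
    simp only [hα, hβ, hQ, ← Real.rpow_add hq0, ← Real.rpow_mul_natCast hq0.le]; ring_nf
  have hQαβt : q ^ ((n : ℝ) + a + b + 1/2) = (Q * α * β * t) ^ 2 := by
    simp only [hα, hβ, hQ, ht, ← Real.rpow_add hq0, ← Real.rpow_mul_natCast hq0.le]; ring_nf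
  rw [sum_congr rfl fun j _ => hB j, sum_rpow_div_mul_one_sub hq0 hq1.ne hden, hγq, hγq, hQ_pred,
    hr, hs]
  simp only [neg_div, Real.rpow_neg hq0.le, Int.cast_natCast]
  rw [← hQ, hq_half, hqn, hαβ, hαt, hβt, hαβt, hαβQ, hQαβt, hq]
  refine structure_coeff_closed_form (by positivity) (hq ▸ hq1.ne) (by positivity) (by positivity)
    (by positivity) ?_ (hαβQ ▸ hden n)
  simpa [hαβ] using hden 0
end
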